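/- Let R be a commutative Noetherian local ring and X a resolving subcategory of mod R contained in the category G(R) of totally reflexive modules. If X is closed under R-duals (M ∈ X implies M* = Hom_R(M,R) ∈ X), then X is closed under cosyzygies, and hence X is a thick subcategory of G(R). -/

import Mathlib

open CategoryTheory IsLocalRing

universe u

section Prelim

variable (R : Type u) [CommRing R]

/-- The depth of a module over a local ring: the supremum of the lengths of
(weakly) regular sequences on `M` consisting of elements of the maximal ideal. -/
noncomputable def mdepth [IsLocalRing R] (M : Type u) [AddCommGroup M] [Module R M] : ℕ∞ :=
  sSup {n : ℕ∞ | ∃ rs : List R, (rs.length : ℕ∞) = n ∧ (∀ r ∈ rs, r ∈ maximalIdeal R) ∧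
    RingTheory.Sequence.IsWeaklyRegular M rs}

/-- A short exact sequence `0 → L → M → N → 0` of `R`-modules. -/
def SES (L M N : ModuleCat.{u} R) : Prop :=
  ∃ (f : L →ₗ[R] M) (g : M →ₗ[R] N),
    Function.Injective f ∧ Function.Surjective g ∧ LinearMap.ker g = LinearMap.range f

/-- `N` is a direct summand of `M`. -/
def IsSummand (N M : ModuleCat.{u} R) : Prop :=
  ∃ (i : N →ₗ[R] M) (p : M →ₗ[R] N), p.comp i = LinearMap.id

/-- `N` is a (minimal) first syzygy of `M`: the kernel of a minimal free cover of `M`. -/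
def IsSyzygy (M N : ModuleCat.{u} R) : Prop :=
  ∃ (n : ℕ) (f : (Fin n → R) →ₗ[R] M), Function.Surjective f ∧
    LinearMap.ker f ≤ ((⊥ : Ideal R).jacobson) • (⊤ : Submodule R (Fin n → R)) ∧
    Nonempty (N ≃ₗ[R] LinearMap.ker f)

/-- `N` is an `n`-th (minimal) syzygy of `M`. -/
def IsNSyzygy : ℕ → ModuleCat.{u} R → ModuleCat.{u} R → Prop
  | 0, M, N => Nonempty (N ≃ₗ[R] M)
  | n + 1, M, N => ∃ K : ModuleCat.{u} R, IsSyzygy R M K ∧ IsNSyzygy n K N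

/-- The additive closure of a class of modules: closure under finite direct sums
and direct summands. -/
inductive AddClosure (T : Set (ModuleCat.{u} R)) : ModuleCat.{u} R → Prop
  | of {M : ModuleCat.{u} R} : M ∈ T → AddClosure T M
  | prod {M N : ModuleCat.{u} R} : AddClosure T M → AddClosure T N →
      AddClosure T (ModuleCat.of R (M × N))
  | summand {M N : ModuleCat.{u} R} : AddClosure T M → IsSummand R N M → AddClosure T N

/-- `[X]`: the additive closure of `{R} ∪ {Ω^i X : i ≥ 0, X ∈ X}`. -/
def bracket (X : Set (ModuleCat.{u} R)) : Set (ModuleCat.{u} R) :=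
  {M | AddClosure R (insert (ModuleCat.of R R)
    {N | ∃ M₀ ∈ X, ∃ i : ℕ, IsNSyzygy R i M₀ N}) M}

/-- `X ∘ Y`: modules `M` fitting in an exact sequence `0 → X → M → Y → 0`. -/
def circOp (X Y : Set (ModuleCat.{u} R)) : Set (ModuleCat.{u} R) :=
  {M | ∃ X₀ ∈ X, ∃ Y₀ ∈ Y, SES R X₀ M Y₀}

/-- `X • Y = [[X] ∘ [Y]]`. -/
def bull (X Y : Set (ModuleCat.{u} R)) : Set (ModuleCat.{u} R) :=
  bracket R (circOp R (bracket R X) (bracket R Y))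

/-- The ball `[C]_r` of radius `r` centered at `C`. -/
def ball (C : ModuleCat.{u} R) : ℕ → Set (ModuleCat.{u} R)
  | 0 => ∅
  | 1 => bracket R {C}
  | r + 2 => bracket R (circOp R (ball C (r + 1)) (bracket R {C}))

/-- A resolving subcategory of `mod R`. -/
def IsResolving (X : Set (ModuleCat.{u} R)) : Prop :=
  (∀ M ∈ X, Module.Finite R M) ∧
  (ModuleCat.of R R ∈ X) ∧
  (∀ M ∈ X, ∀ N : ModuleCat.{u} R, IsSummand R N M → N ∈ X) ∧
  (∀ L M N : ModuleCat.{u} R, SES R L M N → L ∈ X → N ∈ X → M ∈ X) ∧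
  (∀ L M N : ModuleCat.{u} R, SES R L M N → M ∈ X → N ∈ X → L ∈ X)

end Prelim

section Prelim2

variable (R : Type u) [CommRing R]

/-- The Ext module `Ext^n_R(M, N)`. -/
noncomputable def extM (M N : ModuleCat.{u} R) (n : ℕ) : ModuleCat.{u} R :=
  ((Ext R (ModuleCat.{u} R) n).obj (Opposite.op M)).obj N

/-- A finitely generated module `M` is totally reflexive if `M → M**` is bijective and
`Ext^i(M, R) = 0 = Ext^i(M*, R)` for all `i > 0`. -/
def TotallyReflexive (M : Type u) [AddCommGroup M] [Module R M] : Prop :=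
  Module.Finite R M ∧
  Function.Bijective (Module.Dual.eval R M) ∧
  (∀ i : ℕ, 0 < i →
    Subsingleton (extM R (ModuleCat.of R M) (ModuleCat.of R R) i)) ∧
  (∀ i : ℕ, 0 < i →
    Subsingleton (extM R (ModuleCat.of R (Module.Dual R M)) (ModuleCat.of R R) i))

/-- `C` is a first cosyzygy `Ω⁻¹M` of `M`: the `R`-dual of a minimal first syzygy of `M*`. -/
def IsCosyzygy (M : Type u) [AddCommGroup M] [Module R M] (C : ModuleCat.{u} R) : Prop :=
  ∃ K : ModuleCat.{u} R, IsSyzygy R (ModuleCat.of R (Module.Dual R M)) K ∧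
    Nonempty (C ≃ₗ[R] Module.Dual R K)

/-- `T` is the Auslander transpose of `M`: the cokernel of the dual of the first map
in a minimal free presentation of `M`. -/
def IsTranspose (M T : ModuleCat.{u} R) : Prop :=
  ∃ (n₀ n₁ : ℕ) (d : (Fin n₁ → R) →ₗ[R] (Fin n₀ → R)) (p : (Fin n₀ → R) →ₗ[R] M),
    Function.Surjective p ∧ LinearMap.ker p = LinearMap.range d ∧
    LinearMap.ker p ≤ ((⊥ : Ideal R).jacobson) • (⊤ : Submodule R (Fin n₀ → R)) ∧
    LinearMap.ker d ≤ ((⊥ : Ideal R).jacobson) • (⊤ : Submodule R (Fin n₁ → R)) ∧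
    Nonempty (T ≃ₗ[R] (Module.Dual R (Fin n₁ → R) ⧸ LinearMap.range d.dualMap))

/-- The `I`-torsion submodule `Γ_I(M)`. -/
def torsSub (I : Ideal R) (M : Type u) [AddCommGroup M] [Module R M] : Submodule R M :=
  ⨆ n : ℕ, Submodule.torsionBySet R M ((I ^ n : Ideal R) : Set R)

/-- A Noetherian local ring is Gorenstein iff it has finite self-injective dimension,
iff `Ext^i(k, R) = 0` for all sufficiently large `i`. -/
def IsGorensteinLocal [IsLocalRing R] : Prop :=
  ∃ n : ℕ, ∀ i : ℕ, n < i →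
    Subsingleton (extM R (ModuleCat.of R (ResidueField R)) (ModuleCat.of R R) i)

/-- A maximal Cohen-Macaulay module: finitely generated with depth equal to `dim R`. -/
def IsMCM [IsLocalRing R] (M : ModuleCat.{u} R) : Prop :=
  Module.Finite R M ∧ ((mdepth R M : ℕ∞) : WithBot ℕ∞) = ringKrullDim R

/-- `X` is a thick subcategory of `G`: closed under direct summands and two-out-of-three
for short exact sequences with all terms in `G`. -/
def IsThickIn (G X : Set (ModuleCat.{u} R)) : Prop :=
  X ⊆ G ∧ (∀ M ∈ X, ∀ N : ModuleCat.{u} R, IsSummand R N M → N ∈ X) ∧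
  (∀ L M N : ModuleCat.{u} R, L ∈ G → M ∈ G → N ∈ G → SES R L M N →
    ((L ∈ X ∧ M ∈ X) → N ∈ X) ∧ ((L ∈ X ∧ N ∈ X) → M ∈ X) ∧ ((M ∈ X ∧ N ∈ X) → L ∈ X))

/-- The resolving closure `res M`: the smallest resolving subcategory containing `M`. -/
def resClosure (M : ModuleCat.{u} R) : Set (ModuleCat.{u} R) :=
  ⋂₀ {X | IsResolving R X ∧ M ∈ X}

/-- The ball `|G|_r` (no syzygies, no free modules added). -/
def pball (G : ModuleCat.{u} R) : ℕ → Set (ModuleCat.{u} R)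
  | 0 => ∅
  | 1 => {M | AddClosure R {G} M}
  | r + 2 => {M | AddClosure R
      (circOp R (pball G (r + 1)) {N | AddClosure R {G} N}) M}

/-- An indecomposable module. -/
def Indecomp (M : ModuleCat.{u} R) : Prop :=
  ¬ Subsingleton M ∧ ∀ A B : Submodule R M, IsCompl A B → A = ⊥ ∨ B = ⊥

/-- `N` is the kernel of some surjection from a finite free module onto `M`
(a not-necessarily-minimal syzygy). -/
def IsGSyzygy (M N : ModuleCat.{u} R) : Prop :=
  ∃ (n : ℕ) (f : (Fin n → R) →ₗ[R] M), Function.Surjective f ∧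
    Nonempty (N ≃ₗ[R] LinearMap.ker f)

/-- `N` is an `n`-fold (not-necessarily-minimal) syzygy of `M`. -/
def IsGNSyzygy : ℕ → ModuleCat.{u} R → ModuleCat.{u} R → Prop
  | 0, M, N => Nonempty (N ≃ₗ[R] M)
  | n + 1, M, N => ∃ K : ModuleCat.{u} R, IsGSyzygy R M K ∧ IsGNSyzygy n K N

/-- Projective dimension at most `n`. -/
def PdLE (n : ℕ) (M : ModuleCat.{u} R) : Prop :=
  ∃ N : ModuleCat.{u} R, IsGNSyzygy R n M N ∧ Module.Projective R N

/-- Projective dimension, as an element of `ℕ∞`. -/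
noncomputable def pdim (M : ModuleCat.{u} R) : ℕ∞ :=
  sInf {n : ℕ∞ | ∃ m : ℕ, (m : ℕ∞) = n ∧ PdLE R m M}

end Prelim2

/-!
A cosyzygy of `M` is the dual of a syzygy of `M*`, so closure under syzygies and duals gives
closure under cosyzygies. In a short exact sequence `0 → L → M → N → 0` of totally reflexive
modules, two of the three cases of two-out-of-three are resolving axioms. In the third,
`L, M ∈ X`, the vanishing of `Ext¹(N, R)` makes `0 → N* → M* → L* → 0` exact, so `N* ∈ X` as
a kernel of an epimorphism in `X`, and `N ≅ N** ∈ X`.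
-/

open Opposite

theorem CategoryTheory.ProjectiveResolution.exists_d_comp_eq_of_subsingleton_ext_one
    (R : Type*) [Ring R] {C : Type*} [Category C] [Abelian C] [Linear R C] [EnoughProjectives C]
    {X Y : C} (P : ProjectiveResolution X) [Subsingleton (((Ext R C 1).obj (op X)).obj Y)]
    (θ : P.complex.X 1 ⟶ Y) (hθ : P.complex.d 2 1 ≫ θ = 0) :
    ∃ θ₀ : P.complex.X 0 ⟶ Y, P.complex.d 1 0 ≫ θ₀ = θ := by
  have hexact : (P.complex.linearYonedaObj R Y).ExactAt 1 := by
    rw [HomologicalComplex.exactAt_iff_isZero_homology]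
    exact ModuleCat.isZero_of_subsingleton _ |>.of_iso (P.isoExt 1 Y).symm
  rw [(P.complex.linearYonedaObj R Y).exactAt_iff' 0 1 2 (by simp) (by simp),
    ShortComplex.moduleCat_exact_iff] at hexact
  exact hexact θ hθ

section

variable {R : Type u} [CommRing R]

/-- With `lift : P → M` lifting `ε` and `ψ : ker ε → L` induced by it, `M` is the quotient of
`L × P` by `(l, x) ↦ f l + lift x`, and `φ` together with an extension of `φ ∘ ψ` descends. -/
theorem LinearMap.exists_comp_eq_of_extends_along_ker {P L M N Y : Type*}
    [AddCommGroup P] [Module R P] [Module.Projective R P] [AddCommGroup L] [Module R L]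
    [AddCommGroup M] [Module R M] [AddCommGroup N] [Module R N] [AddCommGroup Y] [Module R Y]
    {ε : P →ₗ[R] N} (hε : Function.Surjective ε)
    (hK : ∀ θ : ker ε →ₗ[R] Y, ∃ θ₀ : P →ₗ[R] Y, θ₀ ∘ₗ (ker ε).subtype = θ)
    {f : L →ₗ[R] M} {g : M →ₗ[R] N} (hf : Function.Injective f) (hg : Function.Surjective g)
    (hfg : ker g = range f) (φ : L →ₗ[R] Y) : ∃ Φ : M →ₗ[R] Y, Φ ∘ₗ f = φ := by
  obtain ⟨lift, hlift⟩ := Module.projective_lifting_property g ε hg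
  have hlift_mem (x : ker ε) : lift x ∈ range f := by
    rw [← hfg, mem_ker, ← comp_apply, hlift]
    exact x.2
  let ψ : ker ε →ₗ[R] L := (LinearEquiv.ofInjective f hf).symm.toLinearMap ∘ₗ
    (lift ∘ₗ (ker ε).subtype).codRestrict (range f) hlift_mem
  have hψ (x : ker ε) : f (ψ x) = lift x :=
    congrArg Subtype.val ((LinearEquiv.ofInjective f hf).apply_symm_apply ⟨lift x, hlift_mem x⟩)
  obtain ⟨θ, hθ⟩ := hK (φ ∘ₗ ψ)
  let s : L × P →ₗ[R] M := f.coprod lift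
  have hs : Function.Surjective s := by
    intro m
    obtain ⟨x, hx⟩ := hε (g m)
    obtain ⟨l, hl⟩ : m - lift x ∈ range f := by
      rw [← hfg, mem_ker, map_sub, ← comp_apply, hlift, hx, sub_self]
    exact ⟨(l, x), by simp [s, hl]⟩
  have hker : ker s ≤ ker (φ.coprod θ) := by
    rintro ⟨l, x⟩ hlx
    have hlift_x : lift x = -f l := eq_neg_of_add_eq_zero_right hlx
    have hx : x ∈ ker ε := by
      have hfl : f l ∈ ker g := hfg ▸ mem_range_self f l
      rw [mem_ker, ← hlift, comp_apply, hlift_x, map_neg, hfl, neg_zero]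
    have hψx : ψ ⟨x, hx⟩ = -l := hf (by rw [hψ, map_neg]; exact hlift_x)
    change φ l + θ x = 0
    have hθx : θ x = φ (ψ ⟨x, hx⟩) := LinearMap.congr_fun hθ ⟨x, hx⟩
    rw [hθx, hψx, map_neg, add_neg_cancel]
  refine ⟨(ker s).liftQ _ hker ∘ₗ (s.quotKerEquivOfSurjective hs).symm.toLinearMap, ?_⟩
  ext l
  have hl : f l = s (l, 0) := by simp [s]
  simp [hl]

theorem CategoryTheory.ProjectiveResolution.exists_comp_ker_subtype_eq_of_subsingleton_ext_one
    {N Y : ModuleCat.{u} R} (P : ProjectiveResolution N)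
    [Subsingleton (((Ext R (ModuleCat.{u} R) 1).obj (op N)).obj Y)]
    (θ : LinearMap.ker (P.π.f 0).hom →ₗ[R] Y) :
    ∃ θ₀ : P.complex.X 0 →ₗ[R] Y, θ₀ ∘ₗ (LinearMap.ker (P.π.f 0).hom).subtype = θ := by
  have hd_mem (y : P.complex.X 1) : P.complex.d 1 0 y ∈ LinearMap.ker (P.π.f 0).hom := by
    rw [LinearMap.mem_ker, ← ModuleCat.comp_apply, P.complex_d_comp_π_f_zero]
    rfl
  let d : P.complex.X 1 →ₗ[R] LinearMap.ker (P.π.f 0).hom :=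
    (P.complex.d 1 0).hom.codRestrict _ hd_mem
  obtain ⟨θ₀, hθ₀⟩ := P.exists_d_comp_eq_of_subsingleton_ext_one R (ModuleCat.ofHom (θ ∘ₗ d)) (by
    ext z
    have hdd : d (P.complex.d 2 1 z) = 0 := Subtype.ext (by
      simp only [d, LinearMap.codRestrict_apply, ← ModuleCat.comp_apply,
        HomologicalComplex.d_comp_d]
      rfl)
    exact (congrArg θ hdd).trans (map_zero θ))
  refine ⟨θ₀.hom, ?_⟩
  ext ⟨x, hx⟩
  obtain ⟨y, rfl⟩ := (ShortComplex.moduleCat_exact_iff _).1 P.exact₀ x hx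
  exact congrArg (fun φ ↦ φ.hom y) hθ₀

theorem SES.exists_comp_eq_of_subsingleton_ext_one {L M N Y : ModuleCat.{u} R}
    [Subsingleton (((Ext R (ModuleCat.{u} R) 1).obj (op N)).obj Y)]
    {f : L →ₗ[R] M} {g : M →ₗ[R] N} (hf : Function.Injective f) (hg : Function.Surjective g)
    (hfg : LinearMap.ker g = LinearMap.range f) (φ : L →ₗ[R] Y) :
    ∃ Φ : M →ₗ[R] Y, Φ ∘ₗ f = φ := by
  obtain ⟨P⟩ := HasProjectiveResolution.out (Z := N)
  have : Module.Projective R (P.complex.X 0) := (IsProjective.iff_projective _).2 (P.projective 0)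
  exact LinearMap.exists_comp_eq_of_extends_along_ker
    ((ModuleCat.epi_iff_surjective (P.π.f 0)).1 inferInstance)
    P.exists_comp_ker_subtype_eq_of_subsingleton_ext_one hf hg hfg φ

theorem SES.dual {L M N : ModuleCat.{u} R} (h : SES R L M N)
    (hN : Subsingleton (extM R N (ModuleCat.of R R) 1)) :
    SES R (ModuleCat.of R (Module.Dual R N)) (ModuleCat.of R (Module.Dual R M))
      (ModuleCat.of R (Module.Dual R L)) := by
  obtain ⟨f, g, hf, hg, hfg⟩ := h
  have : Subsingleton (((Ext R (ModuleCat.{u} R) 1).obj (op N)).obj (ModuleCat.of R R)) := hN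
  refine ⟨g.dualMap, f.dualMap, LinearMap.dualMap_injective_of_surjective hg,
    SES.exists_comp_eq_of_subsingleton_ext_one (Y := ModuleCat.of R R) hf hg hfg, ?_⟩
  rw [LinearMap.ker_dualMap_eq_dualAnnihilator_range, ← hfg,
    LinearMap.range_dualMap_eq_dualAnnihilator_ker_of_surjective g hg]

theorem SES.prod (A B : ModuleCat.{u} R) : SES R A (ModuleCat.of R (A × B)) B :=
  ⟨LinearMap.inl R A B, LinearMap.snd R A B, LinearMap.inl_injective,
    LinearMap.snd_surjective, LinearMap.ker_snd R A B⟩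

namespace IsResolving

variable {X : Set (ModuleCat.{u} R)}

theorem mem_of_linearEquiv (hX : IsResolving R X) {A B : ModuleCat.{u} R} (hA : A ∈ X)
    (e : B ≃ₗ[R] A) : B ∈ X :=
  hX.2.2.1 A hA B ⟨e.toLinearMap, e.symm.toLinearMap, by ext; simp⟩

theorem prod_mem (hX : IsResolving R X) {A B : ModuleCat.{u} R} (hA : A ∈ X) (hB : B ∈ X) :
    ModuleCat.of R (A × B) ∈ X :=
  hX.2.2.2.1 _ _ _ (SES.prod A B) hA hB

theorem pi_fin_mem (hX : IsResolving R X) (n : ℕ) : ModuleCat.of R (Fin n → R) ∈ X := by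
  induction n with
  | zero => exact hX.2.2.1 _ hX.2.1 _ ⟨0, 0, Subsingleton.elim _ _⟩
  | succ n ih =>
    exact hX.mem_of_linearEquiv (hX.prod_mem hX.2.1 ih) (Fin.consLinearEquiv R fun _ ↦ R).symm

theorem mem_of_isCosyzygy (hX : IsResolving R X)
    (hdual : ∀ M ∈ X, ModuleCat.of R (Module.Dual R M) ∈ X) {M C : ModuleCat.{u} R}
    (hM : M ∈ X) (hC : IsCosyzygy R M C) : C ∈ X := by
  obtain ⟨K, ⟨n, f, hf, -, ⟨eK⟩⟩, ⟨eC⟩⟩ := hC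
  have hker : ModuleCat.of R (LinearMap.ker f) ∈ X :=
    hX.2.2.2.2 _ _ _ ⟨(LinearMap.ker f).subtype, f, Submodule.injective_subtype _, hf,
      (Submodule.range_subtype _).symm⟩ (hX.pi_fin_mem n) (hdual M hM)
  exact hX.mem_of_linearEquiv (hdual K (hX.mem_of_linearEquiv hker eK)) eC

theorem mem_of_ses_of_totallyReflexive (hX : IsResolving R X)
    (hdual : ∀ M ∈ X, ModuleCat.of R (Module.Dual R M) ∈ X) {L M N : ModuleCat.{u} R}
    (h : SES R L M N) (hL : L ∈ X) (hM : M ∈ X) (hN : TotallyReflexive R N) : N ∈ X := by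
  obtain ⟨-, hNrefl, hNext, -⟩ := hN
  have hDN : ModuleCat.of R (Module.Dual R N) ∈ X :=
    hX.2.2.2.2 _ _ _ (h.dual (hNext 1 one_pos)) (hdual M hM) (hdual L hL)
  exact hX.mem_of_linearEquiv (hdual _ hDN) (.ofBijective _ hNrefl)

theorem isThickIn_totallyReflexive (hX : IsResolving R X)
    (hsub : X ⊆ {M : ModuleCat.{u} R | TotallyReflexive R M})
    (hdual : ∀ M ∈ X, ModuleCat.of R (Module.Dual R M) ∈ X) :
    IsThickIn R {M : ModuleCat.{u} R | TotallyReflexive R M} X :=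
  ⟨hsub, hX.2.2.1, fun _ _ _ _ _ hN h ↦
    ⟨fun ⟨hL, hM⟩ ↦ hX.mem_of_ses_of_totallyReflexive hdual h hL hM hN,
      fun ⟨hL, hN⟩ ↦ hX.2.2.2.1 _ _ _ h hL hN, fun ⟨hM, hN⟩ ↦ hX.2.2.2.2 _ _ _ h hM hN⟩⟩

end IsResolving

end

theorem resolving_dualClosed_isThick_general
    (R : Type u) [CommRing R]
    (X : Set (ModuleCat.{u} R)) (hres : IsResolving R X)
    (hsub : X ⊆ {M : ModuleCat.{u} R | TotallyReflexive R ↥M})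
    (hdual : ∀ M ∈ X, ModuleCat.of R (Module.Dual R ↥M) ∈ X) :
    (∀ M ∈ X, ∀ C : ModuleCat.{u} R, IsCosyzygy R ↥M C → C ∈ X) ∧
    IsThickIn R {M : ModuleCat.{u} R | TotallyReflexive R ↥M} X :=
  ⟨fun _ hM _ hC ↦ hres.mem_of_isCosyzygy hdual hM hC, hres.isThickIn_totallyReflexive hsub hdual⟩

/-- Let `X` be a resolving subcategory of `mod R` contained in the
category `G(R)` of totally reflexive modules. If `X` is closed under `R`-duals, then
`X` is closed under cosyzygies, and hence `X` is a thick subcategory of `G(R)`. -/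
theorem resolving_dualClosed_isThick
    (R : Type u) [CommRing R] [IsNoetherianRing R] [IsLocalRing R]
    (X : Set (ModuleCat.{u} R)) (hres : IsResolving R X)
    (hsub : X ⊆ {M : ModuleCat.{u} R | TotallyReflexive R ↥M})
    (hdual : ∀ M ∈ X, ModuleCat.of R (Module.Dual R ↥M) ∈ X) :
    (∀ M ∈ X, ∀ C : ModuleCat.{u} R, IsCosyzygy R ↥M C → C ∈ X) ∧
    IsThickIn R {M : ModuleCat.{u} R | TotallyReflexive R ↥M} X :=
  resolving_dualClosed_isThick_general R X hres hsub hdual
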